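/- arXiv:1304.5434 — 4 statements merged into one kernel-verified Lean document; each statement's English description precedes it below -/
import Mathlib

section
/- Let M be a differential module over ℂ(z) carrying a nondegenerate bilinear form ⟨·,·⟩ compatible with the derivation (i.e. d/dz ⟨m₁,m₂⟩ = ⟨∂m₁,m₂⟩ + ⟨m₁,∂m₂⟩), and let e ∈ M be a cyclic vector with ⟨e, ∂^i e⟩ = 0 for 0 ≤ i ≤ n−1 and ⟨e, ∂^n e⟩ = α ≠ 0, where rank M = n+1. Then the form is (−1)^n-symmetric: ⟨x, y⟩ = (−1)^n ⟨y, x⟩ for all x, y ∈ M. -/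
/-!
The form `C = B - (-1)ⁿ B.flip` is again compatible with the derivation. Moving derivatives across
`B` one at a time gives `⟨∂ⁱe, e⟩ = (-1)ⁱ ⟨e, ∂ⁱe⟩` for `i ≤ n`, so the vanishing conditions put `e`
in the left kernel of `C`. Compatibility makes that left kernel stable under `∂`, so it contains the
spanning family `e, ∂e, …, ∂ⁿe`, whence `C = 0`.
-/

section

variable {R M : Type*} [CommRing R] [AddCommGroup M] [Module R M]

def IsCompatibleForm (D : R →+ R) (dM : M → M) (B : M →ₗ[R] M →ₗ[R] R) : Prop :=
  ∀ m₁ m₂, D (B m₁ m₂) = B (dM m₁) m₂ + B m₁ (dM m₂)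

namespace IsCompatibleForm

variable {D : R →+ R} {dM : M → M} {B B' : M →ₗ[R] M →ₗ[R] R}

theorem flip (hB : IsCompatibleForm D dM B) : IsCompatibleForm D dM B.flip := fun m₁ m₂ => by
  simp only [LinearMap.flip_apply, hB m₂ m₁, add_comm]

theorem sub (hB : IsCompatibleForm D dM B) (hB' : IsCompatibleForm D dM B') :
    IsCompatibleForm D dM (B - B') := fun m₁ m₂ => by
  simp only [LinearMap.sub_apply, map_sub, hB m₁ m₂, hB' m₁ m₂]
  abel

theorem zsmul (hB : IsCompatibleForm D dM B) (k : ℤ) :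
    IsCompatibleForm D dM (k • B) := fun m₁ m₂ => by
  simp only [LinearMap.smul_apply, map_zsmul, hB m₁ m₂, smul_add]

theorem apply_dM_left_of_eq_zero (hB : IsCompatibleForm D dM B) {x y : M} (h : B x y = 0) :
    B (dM x) y = -B x (dM y) := by
  have := hB x y
  rw [h, map_zero] at this
  linear_combination -this

theorem apply_dM_eq_zero (hB : IsCompatibleForm D dM B) {x : M} (hx : B x = 0) :
    B (dM x) = 0 := by
  ext y
  rw [hB.apply_dM_left_of_eq_zero (by rw [hx, LinearMap.zero_apply]), hx]
  simp

theorem apply_iterate_eq_zero (hB : IsCompatibleForm D dM B) {x : M} (hx : B x = 0) (i : ℕ) :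
    B (dM^[i] x) = 0 := by
  induction i with
  | zero => exact hx
  | succ i ih => rw [Function.iterate_succ_apply']; exact hB.apply_dM_eq_zero ih

section Cyclic

variable {e : M} {n : ℕ}

theorem apply_iterate_iterate (hB : IsCompatibleForm D dM B)
    (hvanish : ∀ k < n, B e (dM^[k] e) = 0) (i j : ℕ) (hij : i + j ≤ n) :
    B (dM^[i] e) (dM^[j] e) = (-1) ^ i * B e (dM^[i + j] e) := by
  induction i generalizing j with
  | zero => simp
  | succ i ih =>
    have hzero : B (dM^[i] e) (dM^[j] e) = 0 := by
      rw [ih j (by omega), hvanish (i + j) (by omega), mul_zero]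
    rw [Function.iterate_succ_apply', hB.apply_dM_left_of_eq_zero hzero,
      ← Function.iterate_succ_apply' dM j, ih (j + 1) (by omega),
      show i + (j + 1) = i + 1 + j by omega, pow_succ]
    ring

theorem apply_iterate_eq_neg_one_pow_mul (hB : IsCompatibleForm D dM B)
    (hvanish : ∀ k < n, B e (dM^[k] e) = 0) {j : ℕ} (hj : j ≤ n) :
    B e (dM^[j] e) = (-1) ^ n * B (dM^[j] e) e := by
  have hflip := hB.apply_iterate_iterate hvanish j 0 (by omega)
  rw [Function.iterate_zero_apply, add_zero] at hflip
  rcases hj.lt_or_eq with hj | rfl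
  · rw [hflip, hvanish j hj, mul_zero, mul_zero]
  · rw [hflip, ← mul_assoc, ← pow_add, Even.neg_one_pow ⟨j, rfl⟩, one_mul]

theorem eq_neg_one_pow_mul_flip (hB : IsCompatibleForm D dM B)
    (hspan : Submodule.span R (Set.range fun i : Fin (n + 1) => dM^[i] e) = ⊤)
    (hvanish : ∀ k < n, B e (dM^[k] e) = 0) (x y : M) :
    B x y = (-1) ^ n * B y x := by
  set C := B - ((-1 : ℤ) ^ n) • B.flip
  have hC : IsCompatibleForm D dM C := hB.sub (hB.flip.zsmul _)
  have hCapply (x y : M) : C x y = B x y - (-1) ^ n * B y x := by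
    simp [C, zsmul_eq_mul]
  have hCe : C e = 0 := LinearMap.ext_on_range hspan fun j => by
    rw [hCapply, hB.apply_iterate_eq_neg_one_pow_mul hvanish (Nat.lt_succ_iff.mp j.isLt),
      sub_self, LinearMap.zero_apply]
  have hCzero : C = 0 :=
    LinearMap.ext_on_range hspan fun i => hC.apply_iterate_eq_zero hCe i
  have hxy := hCapply x y
  rw [hCzero, LinearMap.zero_apply, LinearMap.zero_apply] at hxy
  linear_combination -hxy

end Cyclic

end IsCompatibleForm

end

theorem selfdual_pairing_symmetric_general
    (n : ℕ) (M : Type*) [AddCommGroup M] [Module (RatFunc ℂ) M]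
    (D : RatFunc ℂ → RatFunc ℂ)
    (hDadd : ∀ x y, D (x + y) = D x + D y)
    (dM : M → M)
    (B : M →ₗ[RatFunc ℂ] M →ₗ[RatFunc ℂ] RatFunc ℂ)
    (hBcompat : ∀ m₁ m₂ : M, D (B m₁ m₂) = B (dM m₁) m₂ + B m₁ (dM m₂))
    (e : M) (b : Module.Basis (Fin (n + 1)) (RatFunc ℂ) M)
    (hb : ∀ i : Fin (n + 1), b i = dM^[(i : ℕ)] e)
    (hvanish : ∀ i : ℕ, i < n → B e (dM^[i] e) = 0) :
    ∀ x y : M, B x y = (-1 : RatFunc ℂ) ^ n * B y x := by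
  have hcompat : IsCompatibleForm (AddMonoidHom.mk' D hDadd) dM B := hBcompat
  have hspan : Submodule.span (RatFunc ℂ) (Set.range fun i : Fin (n + 1) => dM^[i] e) = ⊤ := by
    rw [← funext hb, b.span_eq]
  exact hcompat.eq_neg_one_pow_mul_flip hspan hvanish

/-- Let `M` be a differential module over `ℂ(z)` (with the derivation `d/dz`,
pinned down by `D X = 1` and `D c = 0` for constants), carrying a nondegenerate
bilinear form `B` compatible with the derivation, and let `e` be a cyclic vector such
that `e, ∂e, …, ∂ⁿe` is a basis, `⟨e, ∂^i e⟩ = 0` for `0 ≤ i ≤ n−1`, and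
`⟨e, ∂^n e⟩ = α ≠ 0`.  Then the form is `(−1)ⁿ`-symmetric. -/
theorem selfdual_pairing_symmetric
    (n : ℕ) (M : Type*) [AddCommGroup M] [Module (RatFunc ℂ) M]
    (D : RatFunc ℂ → RatFunc ℂ)
    (hDadd : ∀ x y, D (x + y) = D x + D y)
    (hDmul : ∀ x y, D (x * y) = x * D y + D x * y)
    (hDX : D RatFunc.X = 1)
    (hDC : ∀ c : ℂ, D (RatFunc.C c) = 0)
    (dM : M → M)
    (hdMadd : ∀ x y : M, dM (x + y) = dM x + dM y)
    (hdMleib : ∀ (f : RatFunc ℂ) (m : M), dM (f • m) = f • dM m + D f • m)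
    (B : M →ₗ[RatFunc ℂ] M →ₗ[RatFunc ℂ] RatFunc ℂ)
    (hBnondeg : ∀ x : M, (∀ y : M, B x y = 0) → x = 0)
    (hBcompat : ∀ m₁ m₂ : M, D (B m₁ m₂) = B (dM m₁) m₂ + B m₁ (dM m₂))
    (e : M) (b : Module.Basis (Fin (n + 1)) (RatFunc ℂ) M)
    (hb : ∀ i : Fin (n + 1), b i = dM^[(i : ℕ)] e)
    (hvanish : ∀ i : ℕ, i < n → B e (dM^[i] e) = 0)
    (hα : B e (dM^[n] e) ≠ 0) :
    ∀ x y : M, B x y = (-1 : RatFunc ℂ) ^ n * B y x :=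
  selfdual_pairing_symmetric_general n M D hDadd dM B hBcompat e b hb hvanish
end

section
/- Let y_k = Σ_{j=0}^k (1/j!) ln(z)^j f_{k−j}, 0 ≤ k ≤ n, be a flag of solutions with f_0 ∈ ℚ⟦z⟧*, f_0(0)=1, f_i ∈ ℚ⟦z⟧. Define N_0 := 1 and N_{k+1} := ϑ ∘ (1/N_k(y_k)) ∘ N_k. Then for all 0 ≤ j ≤ n+1: N_j ∈ ℚ⟦z⟧[ϑ], N_j(y_i) = 0 for 0 ≤ i ≤ j−1, and for k ≤ n, N_k(y_k) is a unit power series with constant term 1. -/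
open Polynomial

/-- The Euler operator `ϑ = z d/dz` on `ℚ⟦z⟧`. -/
noncomputable def thetaPS (g : PowerSeries ℚ) : PowerSeries ℚ :=
  PowerSeries.mk fun m => (m : ℚ) * PowerSeries.coeff m g

/-- The Euler operator `ϑ = z d/dz` on `ℚ⟦z⟧[ln z]` (modelled as polynomials in
`X = ln z` over `ℚ⟦z⟧`), acting by `ϑ(g · (ln z)^j) = ϑ(g) (ln z)^j + j g (ln z)^{j-1}`. -/
noncomputable def thetaL (p : Polynomial (PowerSeries ℚ)) : Polynomial (PowerSeries ℚ) :=
  ∑ j ∈ Finset.range (p.natDegree + 1),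
    (Polynomial.C (thetaPS (p.coeff j)) * Polynomial.X ^ j +
      Polynomial.C ((j : ℚ) • p.coeff j) * Polynomial.X ^ (j - 1))

/-- The flag `y_k = Σ_{j=0}^k (1/j!) (ln z)^j f_{k−j}` in `ℚ⟦z⟧[ln z]`. -/
noncomputable def flag (f : ℕ → PowerSeries ℚ) (k : ℕ) : Polynomial (PowerSeries ℚ) :=
  ∑ j ∈ Finset.range (k + 1),
    ((j.factorial : ℚ)⁻¹) • (Polynomial.C (f (k - j)) * Polynomial.X ^ j)

/-- The operators of the local normal form: `N_0 = 1` and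
`N_{k+1} = ϑ ∘ (1/N_k(y_k)) ∘ N_k`. -/
noncomputable def Nop (f : ℕ → PowerSeries ℚ) :
    ℕ → Polynomial (PowerSeries ℚ) → Polynomial (PowerSeries ℚ)
  | 0 => id
  | k + 1 => fun p =>
      thetaL (Polynomial.C (((Nop f k (flag f k)).coeff 0)⁻¹) * Nop f k p)


/-!
The operators `N_k` map the tail of a flag to a flag. If `y_{k+m} = Σ_j (ln z)^j/j! · h_{m-j}` with
`h_0(0) = 1`, then dividing by `h_0` and applying `ϑ` kills the top term (`ϑ 1 = 0`) and, because
`ϑ((ln z)^j/j!) = (ln z)^{j-1}/(j-1)!`, yields again a flag, of length one less, whose leading series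
`ϑ(h_1/h_0) + 1` has constant term `1`. By induction `N_k(y_{k+m})` is the `m`-th member of the
`k`-fold reduced flag, so `N_k(y_k)` is its leading series and `N_{k+1}(y_k) = ϑ 1 = 0`. That each
`N_k` lies in `ℚ⟦z⟧[ϑ]` is the Leibniz rule `ϑ ∘ a = ϑ(a) + a ∘ ϑ`.
-/

section EulerOperator

@[simp]
lemma coeff_thetaPS (g : PowerSeries ℚ) (m : ℕ) :
    PowerSeries.coeff m (thetaPS g) = m * PowerSeries.coeff m g := by
  simp [thetaPS]

@[simp]
lemma thetaPS_zero : thetaPS 0 = 0 := by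
  ext; simp

@[simp]
lemma thetaPS_one : thetaPS 1 = 0 := by
  ext m; simp [PowerSeries.coeff_one]

lemma thetaPS_add (a b : PowerSeries ℚ) : thetaPS (a + b) = thetaPS a + thetaPS b := by
  ext; simp [mul_add]

lemma thetaPS_smul (c : ℚ) (a : PowerSeries ℚ) : thetaPS (c • a) = c • thetaPS a := by
  ext; simp [mul_left_comm]

lemma thetaPS_mul (a b : PowerSeries ℚ) :
    thetaPS (a * b) = thetaPS a * b + a * thetaPS b := by
  ext m
  simp only [coeff_thetaPS, map_add, PowerSeries.coeff_mul, Finset.mul_sum,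
    ← Finset.sum_add_distrib]
  refine Finset.sum_congr rfl fun x hx => ?_
  rw [← Finset.HasAntidiagonal.mem_antidiagonal.mp hx]
  push_cast
  ring

@[simp]
lemma constantCoeff_thetaPS (g : PowerSeries ℚ) : PowerSeries.constantCoeff (thetaPS g) = 0 := by
  rw [← PowerSeries.coeff_zero_eq_constantCoeff_apply, coeff_thetaPS]; simp

lemma coeff_thetaL (p : Polynomial (PowerSeries ℚ)) (m : ℕ) :
    (thetaL p).coeff m = thetaPS (p.coeff m) + ((m + 1 : ℕ) : ℚ) • p.coeff (m + 1) := by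
  simp only [thetaL, finsetSum_coeff, coeff_add, coeff_C_mul_X_pow, Finset.sum_add_distrib]
  congr 1
  · rw [Finset.sum_ite_eq]
    split_ifs with h
    · rfl
    · rw [coeff_eq_zero_of_natDegree_lt (by simpa using h), thetaPS_zero]
  · rw [Finset.sum_range_succ']
    simp only [Nat.add_sub_cancel, Nat.cast_zero, zero_smul, ite_self, add_zero]
    rw [Finset.sum_ite_eq]
    split_ifs with h
    · rfl
    · rw [coeff_eq_zero_of_natDegree_lt (by simp at h; omega), smul_zero]

lemma thetaL_add (p q : Polynomial (PowerSeries ℚ)) : thetaL (p + q) = thetaL p + thetaL q := by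
  ext1 m
  simp only [coeff_thetaL, coeff_add, thetaPS_add, smul_add, add_add_add_comm]

@[simp]
lemma thetaL_zero : thetaL 0 = 0 := by
  ext; simp [coeff_thetaL]

lemma thetaL_sum {ι : Type*} (s : Finset ι) (g : ι → Polynomial (PowerSeries ℚ)) :
    thetaL (∑ i ∈ s, g i) = ∑ i ∈ s, thetaL (g i) :=
  map_sum (AddMonoidHom.mk' thetaL thetaL_add) g s

lemma thetaL_C_mul (a : PowerSeries ℚ) (p : Polynomial (PowerSeries ℚ)) :
    thetaL (C a * p) = C (thetaPS a) * p + C a * thetaL p := by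
  ext1 m
  simp only [coeff_thetaL, coeff_add, coeff_C_mul, thetaPS_mul, mul_add, mul_smul_comm, add_assoc]

lemma thetaL_C (a : PowerSeries ℚ) : thetaL (C a) = C (thetaPS a) := by
  ext m
  cases m <;> simp [coeff_thetaL, coeff_C]

end EulerOperator

section ThetaOperators

/-- `N` is an operator in `ℚ⟦z⟧[ϑ]` of order at most `d`. -/
def IsThetaOperator (d : ℕ) (N : Polynomial (PowerSeries ℚ) → Polynomial (PowerSeries ℚ)) :
    Prop :=
  ∃ b : ℕ → PowerSeries ℚ, ∀ p, N p = ∑ i ∈ Finset.range (d + 1), C (b i) * thetaL^[i] p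

variable {d : ℕ} {N M : Polynomial (PowerSeries ℚ) → Polynomial (PowerSeries ℚ)}

lemma IsThetaOperator.succ (h : IsThetaOperator d N) : IsThetaOperator (d + 1) N := by
  obtain ⟨b, hb⟩ := h
  refine ⟨Function.update b (d + 1) 0, fun p => ?_⟩
  rw [Finset.sum_range_succ, Function.update_self, map_zero, zero_mul, add_zero, hb]
  refine Finset.sum_congr rfl fun i hi => ?_
  rw [Function.update_of_ne (Finset.mem_range.mp hi).ne]

lemma IsThetaOperator.add (hN : IsThetaOperator d N) (hM : IsThetaOperator d M) :
    IsThetaOperator d fun p => N p + M p := by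
  obtain ⟨b, hb⟩ := hN
  obtain ⟨c, hc⟩ := hM
  exact ⟨b + c, fun p => by simp [hb, hc, add_mul, Finset.sum_add_distrib]⟩

lemma IsThetaOperator.C_mul (a : PowerSeries ℚ) (h : IsThetaOperator d N) :
    IsThetaOperator d fun p => C a * N p := by
  obtain ⟨b, hb⟩ := h
  exact ⟨fun i => a * b i, fun p => by simp [hb, Finset.mul_sum, mul_assoc]⟩

lemma IsThetaOperator.thetaL_comp (h : IsThetaOperator d N) :
    IsThetaOperator (d + 1) fun p => thetaL (N p) := by
  obtain ⟨b, hb⟩ := h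
  have hderiv : IsThetaOperator d fun p =>
      ∑ i ∈ Finset.range (d + 1), C (thetaPS (b i)) * thetaL^[i] p :=
    ⟨_, fun _ => rfl⟩
  have hshift : IsThetaOperator (d + 1) fun p =>
      ∑ i ∈ Finset.range (d + 1), C (b i) * thetaL^[i + 1] p :=
    ⟨fun i => if i = 0 then 0 else b (i - 1), fun p => by simp [Finset.sum_range_succ' _ (d + 1)]⟩
  convert hderiv.succ.add hshift using 2 with p
  simp only [hb, thetaL_sum, thetaL_C_mul, Function.iterate_succ_apply', Finset.sum_add_distrib]

lemma isThetaOperator_Nop (f : ℕ → PowerSeries ℚ) (k : ℕ) : IsThetaOperator k (Nop f k) := by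
  induction k with
  | zero => exact ⟨fun _ => 1, fun p => by simp [Nop]⟩
  | succ k ih => exact (ih.C_mul _).thetaL_comp

end ThetaOperators

section Flags

lemma coeff_flag (h : ℕ → PowerSeries ℚ) (m ℓ : ℕ) :
    (flag h m).coeff ℓ = if ℓ ≤ m then (ℓ.factorial : ℚ)⁻¹ • h (m - ℓ) else 0 := by
  simp only [flag, finsetSum_coeff, coeff_smul, coeff_C_mul_X_pow, smul_ite, smul_zero,
    Finset.sum_ite_eq, Finset.mem_range, Nat.lt_succ_iff]

lemma flag_zero (h : ℕ → PowerSeries ℚ) : flag h 0 = C (h 0) := by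
  simp [flag]

lemma C_mul_flag (a : PowerSeries ℚ) (h : ℕ → PowerSeries ℚ) (m : ℕ) :
    C a * flag h m = flag (fun s => a * h s) m := by
  ext1 ℓ
  simp only [coeff_C_mul, coeff_flag]
  split_ifs <;> simp

lemma thetaL_flag_succ (h : ℕ → PowerSeries ℚ) (h0 : thetaPS (h 0) = 0) (m : ℕ) :
    thetaL (flag h (m + 1)) = flag (fun s => thetaPS (h (s + 1)) + h s) m := by
  ext1 ℓ
  rw [coeff_thetaL, coeff_flag, coeff_flag, coeff_flag]
  rcases lt_trichotomy ℓ (m + 1) with hℓ | rfl | hℓ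
  · have hfact : ((ℓ + 1 : ℕ) : ℚ) * ((ℓ + 1).factorial : ℚ)⁻¹ = (ℓ.factorial : ℚ)⁻¹ := by
      rw [Nat.factorial_succ, Nat.cast_mul, mul_inv, mul_inv_cancel_left₀ (by positivity)]
    rw [if_pos hℓ.le, if_pos (by omega), if_pos (by omega), thetaPS_smul, smul_smul, hfact,
      smul_add, show m + 1 - ℓ = m - ℓ + 1 by omega, show m + 1 - (ℓ + 1) = m - ℓ by omega]
  · simp [h0, thetaPS_smul]
  · rw [if_neg (by omega), if_neg (by omega), if_neg (by omega), thetaPS_zero, smul_zero, add_zero]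

noncomputable def reduceFlag (h : ℕ → PowerSeries ℚ) (s : ℕ) : PowerSeries ℚ :=
  thetaPS ((h 0)⁻¹ * h (s + 1)) + (h 0)⁻¹ * h s

lemma constantCoeff_reduceFlag_zero (h : ℕ → PowerSeries ℚ)
    (h0 : PowerSeries.constantCoeff (h 0) ≠ 0) :
    PowerSeries.constantCoeff (reduceFlag h 0) = 1 := by
  simp [reduceFlag, PowerSeries.inv_mul_cancel _ h0]

lemma thetaL_C_inv_mul_flag_succ (h : ℕ → PowerSeries ℚ)
    (h0 : PowerSeries.constantCoeff (h 0) ≠ 0) (m : ℕ) :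
    thetaL (C (h 0)⁻¹ * flag h (m + 1)) = flag (reduceFlag h) m := by
  rw [C_mul_flag, thetaL_flag_succ _ (by rw [PowerSeries.inv_mul_cancel _ h0, thetaPS_one])]
  rfl

end Flags

section NormalForm

lemma Nop_succ_apply (f : ℕ → PowerSeries ℚ) (k : ℕ) (p : Polynomial (PowerSeries ℚ)) :
    Nop f (k + 1) p = thetaL (C ((Nop f k (flag f k)).coeff 0)⁻¹ * Nop f k p) :=
  rfl

variable {f : ℕ → PowerSeries ℚ}

lemma constantCoeff_iterate_reduceFlag (hf0 : PowerSeries.constantCoeff (f 0) = 1) (k : ℕ) :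
    PowerSeries.constantCoeff ((reduceFlag^[k] f) 0) = 1 := by
  induction k with
  | zero => exact hf0
  | succ k ih =>
    rw [Function.iterate_succ_apply']
    exact constantCoeff_reduceFlag_zero _ (by simp [ih])

lemma Nop_flag_add (hf0 : PowerSeries.constantCoeff (f 0) = 1) (k m : ℕ) :
    Nop f k (flag f (k + m)) = flag (reduceFlag^[k] f) m := by
  induction k generalizing m with
  | zero => simp [Nop]
  | succ k ih =>
    have hself : Nop f k (flag f k) = C ((reduceFlag^[k] f) 0) := by
      simpa [flag_zero] using ih 0
    rw [Nop_succ_apply, hself, coeff_C_zero, show k + 1 + m = k + (m + 1) by omega, ih,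
      thetaL_C_inv_mul_flag_succ _ (by simp [constantCoeff_iterate_reduceFlag hf0]),
      Function.iterate_succ_apply']

lemma Nop_flag_self (hf0 : PowerSeries.constantCoeff (f 0) = 1) (k : ℕ) :
    Nop f k (flag f k) = C ((reduceFlag^[k] f) 0) := by
  simpa [flag_zero] using Nop_flag_add hf0 k 0

lemma Nop_flag_of_lt (hf0 : PowerSeries.constantCoeff (f 0) = 1) {i k : ℕ} (hik : i < k) :
    Nop f k (flag f i) = 0 := by
  induction k with
  | zero => omega
  | succ k ih =>
    rw [Nop_succ_apply]
    rcases Nat.lt_succ_iff_lt_or_eq.mp hik with hik | rfl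
    · rw [ih hik, mul_zero, thetaL_zero]
    · rw [Nop_flag_self hf0, coeff_C_zero, ← C_mul,
        PowerSeries.inv_mul_cancel _ (by simp [constantCoeff_iterate_reduceFlag hf0]), thetaL_C,
        thetaPS_one, map_zero]

end NormalForm

theorem normal_form_operators_general
    (n : ℕ) (f : ℕ → PowerSeries ℚ)
    (hf0 : PowerSeries.constantCoeff (f 0) = 1) :
    (∀ j ≤ n + 1, ∃ b : ℕ → PowerSeries ℚ, ∀ p,
        Nop f j p = ∑ i ∈ Finset.range (j + 1), Polynomial.C (b i) * thetaL^[i] p) ∧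
    (∀ j ≤ n + 1, ∀ i < j, Nop f j (flag f i) = 0) ∧
    (∀ k ≤ n, ∃ g : PowerSeries ℚ, Nop f k (flag f k) = Polynomial.C g ∧
        IsUnit g ∧ PowerSeries.constantCoeff g = 1) :=
  ⟨fun j _ => isThetaOperator_Nop f j,
    fun _ _ _ hij => Nop_flag_of_lt hf0 hij,
    fun k _ => ⟨_, Nop_flag_self hf0 k,
      PowerSeries.isUnit_iff_constantCoeff.mpr (by simp [constantCoeff_iterate_reduceFlag hf0 k]),
      constantCoeff_iterate_reduceFlag hf0 k⟩⟩

/-- Let `y_k = Σ_{j=0}^k (1/j!) (ln z)^j f_{k−j}`, `0 ≤ k ≤ n`, be a flag with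
`f_0` a unit power series of constant term `1`, and define `N_0 := 1`,
`N_{k+1} := ϑ ∘ (1/N_k(y_k)) ∘ N_k`.  Then for all `0 ≤ j ≤ n+1` the operator `N_j`
lies in `ℚ⟦z⟧[ϑ]`, `N_j(y_i) = 0` for `0 ≤ i ≤ j−1`, and for `k ≤ n` the element
`N_k(y_k)` is a unit power series with constant term `1`. -/
theorem normal_form_operators
    (n : ℕ) (f : ℕ → PowerSeries ℚ)
    (hf0unit : IsUnit (f 0)) (hf0 : PowerSeries.constantCoeff (f 0) = 1) :
    (∀ j ≤ n + 1, ∃ b : ℕ → PowerSeries ℚ, ∀ p,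
        Nop f j p = ∑ i ∈ Finset.range (j + 1), Polynomial.C (b i) * thetaL^[i] p) ∧
    (∀ j ≤ n + 1, ∀ i < j, Nop f j (flag f i) = 0) ∧
    (∀ k ≤ n, ∃ g : PowerSeries ℚ, Nop f k (flag f k) = Polynomial.C g ∧
        IsUnit g ∧ PowerSeries.constantCoeff g = 1) :=
  normal_form_operators_general n f hf0
end

section
/- Let P be a monic second-order differential operator over ℂ(z) with solution basis {u, v}, and let w_k = u^{n−k} v^k / k! for 0 ≤ k ≤ n. If the exponents of P at z=0 are both 0 and u is holomorphic nonvanishing at 0 while v = ln(z)·u + h with h holomorphic, then w₀, …, w_n form a flag for the symmetric power Sym^n(P): w_k = Σ_{j=0}^k (1/j!) ln(z)^j g_{k−j} with g_0 = u^n a unit power series. -/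
/-!
Take `X = ln z`, so that `u = C u₀` and `v = X * C u₀ + C h` in `ℂ⟦z⟧[X]`. The binomial theorem
in its exponential form `(x + y)ᵏ / k! = ∑ⱼ xʲ / j! * yᵏ⁻ʲ / (k - j)!`, applied to `v`, expands
`w_k = uⁿ⁻ᵏ vᵏ / k!` in powers of `ln z`; the coefficient of `(ln z)ʲ / j!` is `g (k - j)` with
`g m = u₀ⁿ⁻ᵐ hᵐ / m!`, and `g 0 = u₀ⁿ` is a unit because `u₀ 0 ≠ 0`.
-/

open Polynomial Finset Nat

theorem inv_factorial_mul_cast_choose {K : Type*} [Semifield K] [CharZero K] {j k : ℕ}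
    (h : j ≤ k) : (k ! : K)⁻¹ * k.choose j = (j ! : K)⁻¹ * ((k - j)! : K)⁻¹ := by
  have hk : (k ! : K) ≠ 0 := Nat.cast_ne_zero.mpr k.factorial_ne_zero
  rw [Nat.cast_choose K h, mul_div_assoc', inv_mul_cancel₀ hk, one_div, mul_inv]

theorem inv_factorial_smul_add_pow {K A : Type*} [Semifield K] [CharZero K] [CommSemiring A]
    [Algebra K A] (x y : A) (k : ℕ) :
    (k ! : K)⁻¹ • (x + y) ^ k =
      ∑ j ∈ range (k + 1), ((j ! : K)⁻¹ • x ^ j) * (((k - j)! : K)⁻¹ • y ^ (k - j)) := by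
  rw [add_pow, smul_sum]
  refine sum_congr rfl fun j hj => ?_
  rw [smul_mul_smul_comm, ← inv_factorial_mul_cast_choose (mem_range_succ_iff.mp hj), mul_smul,
    mul_comm _ (k.choose j : A), ← nsmul_eq_mul, Nat.cast_smul_eq_nsmul]

def symPowFlagCoeff (K : Type*) {R : Type*} [Semifield K] [CommSemiring R] [Algebra K R]
    (n : ℕ) (u h : R) (m : ℕ) : R :=
  (m ! : K)⁻¹ • (u ^ (n - m) * h ^ m)

theorem inv_factorial_smul_symPow_eq_sum {K R : Type*} [Semifield K] [CharZero K]
    [CommSemiring R] [Algebra K R] {n k : ℕ} (u h : R) (hk : k ≤ n) :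
    (k ! : K)⁻¹ • (C u ^ (n - k) * (X * C u + C h) ^ k) =
      ∑ j ∈ range (k + 1), (j ! : K)⁻¹ • (C (symPowFlagCoeff K n u h (k - j)) * X ^ j) := by
  rw [← mul_smul_comm, inv_factorial_smul_add_pow, mul_sum]
  refine sum_congr rfl fun j hj => ?_
  have hexp : n - (k - j) = n - k + j := by have := mem_range_succ_iff.mp hj; omega
  rw [symPowFlagCoeff, hexp, ← smul_C]
  simp only [mul_smul_comm, smul_mul_assoc, map_mul, map_pow]
  rw [smul_comm]
  congr 2
  ring

/-- Let `P` be a monic second-order operator whose solution basis at `z = 0` (where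
both exponents are `0`) is `u, v` with `u = u₀ ∈ ℂ⟦z⟧` holomorphic and nonvanishing at
`0` and `v = ln(z)·u + h`, `h` holomorphic.  Then the solutions
`w_k = u^{n−k} v^k / k!`, `0 ≤ k ≤ n`, of the symmetric power `Symⁿ(P)` form a flag:
`w_k = Σ_{j=0}^k (1/j!) (ln z)^j g_{k−j}` for a single sequence `g` of power series
with `g_0 = u₀ⁿ` a unit.  (We model `ℂ⟦z⟧[ln z]` as polynomials in `X = ln z`.) -/
theorem sym_power_flag
    (n : ℕ) (u₀ h : PowerSeries ℂ)
    (hu : PowerSeries.constantCoeff u₀ ≠ 0) :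
    ∃ g : ℕ → PowerSeries ℂ,
      g 0 = u₀ ^ n ∧ IsUnit (g 0) ∧
      ∀ k ≤ n,
        ((k.factorial : ℂ)⁻¹) •
            ((Polynomial.C u₀) ^ (n - k) *
              (Polynomial.X * Polynomial.C u₀ + Polynomial.C h) ^ k) =
          ∑ j ∈ Finset.range (k + 1),
            ((j.factorial : ℂ)⁻¹) • (Polynomial.C (g (k - j)) * Polynomial.X ^ j) := by
  have hg₀ : symPowFlagCoeff ℂ n u₀ h 0 = u₀ ^ n := by simp [symPowFlagCoeff]
  refine ⟨symPowFlagCoeff ℂ n u₀ h, hg₀, ?_, fun k hk => inv_factorial_smul_symPow_eq_sum u₀ h hk⟩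
  rw [hg₀]
  exact (PowerSeries.isUnit_iff_constantCoeff.mpr hu.isUnit).pow n
end

section
/- Suppose an irreducible monic operator L over ℂ(z) of order n+1 is self-dual (there is 0 ≠ α ∈ ℂ(z) with L α = α L^∨). Then the differential Galois group G of L, acting on the (n+1)-dimensional solution space, preserves a nondegenerate bilinear form that is antisymmetric if n is odd and symmetric if n is even; hence G embeds into Sp_{n+1}(ℂ) when n+1 is even and into O_{n+1}(ℂ) when n+1 is odd. -/
/-!
Write `C(x, z)` for the bilinear concomitant of `L`, so that `D (C(x, z)) = z · L x − L* z · x`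
(Lagrange's identity). Self-duality says `L* (α⁻¹ y) = (−1)ⁿ⁺¹ α⁻¹ L y`, hence
`Q(x, y) = C(x, α⁻¹ y)` has derivative `α⁻¹ (y · L x − (−1)ⁿ⁺¹ x · L y)`: it is constant on pairs of
solutions, giving a `ℂ`-bilinear form on the solution space, and it is invariant under every
differential automorphism fixing `K`, which fixes `L`, `α` and the constants.

In each variable `Q` is a differential operator of order `≤ n`. By the Wronskian criterion, such
an operator vanishing on `n + 1` independent elements is zero, and so is one with constant values
once there are `n + 2` independent elements. Applied to `x ↦ Q(x, y) − (−1)ⁿ Q(y, x)`, whose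
derivative vanishes identically, this gives `(−1)ⁿ`-symmetry; applied to `Q(x, ·)` for a solution
`x` orthogonal to all solutions, it gives `Q(x, ·) = 0`, and Lagrange's identity at a non-solution
`v` then forces `x = 0`. Such a `v` exists unless `L` kills all of `E`; then `E` is finite over `ℂ`,
so `E = ℂ`, `n = 0`, and `Q(x, y) = x y` will do.
-/

namespace Derivation

section CommRing

variable {R A : Type*} [CommRing R] [CommRing A] [Algebra R A]

def ofLeibniz (D : A → A) (hadd : ∀ x y, D (x + y) = D x + D y)
    (hmul : ∀ x y, D (x * y) = x * D y + D x * y) (hR : ∀ c, D (algebraMap R A c) = 0) :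
    Derivation R A A :=
  .mk' ⟨⟨D, hadd⟩, fun c x => by simp [Algebra.smul_def, hmul, hR]⟩ fun x y => by
    simp [hmul, mul_comm]

variable (D : Derivation R A A)

def diffOpsLT (r : ℕ) : Submodule A (A → A) :=
  Submodule.span A (Set.range fun k : Fin r => (⇑D)^[k])

variable {D}

theorem iterate_mem_diffOpsLT {k r : ℕ} (h : k < r) : (⇑D)^[k] ∈ D.diffOpsLT r :=
  Submodule.subset_span ⟨⟨k, h⟩, rfl⟩

theorem diffOpsLT_mono : Monotone D.diffOpsLT := fun _ _ h =>
  Submodule.span_le.2 <| Set.range_subset_iff.2 fun k => iterate_mem_diffOpsLT (k.2.trans_le h)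

theorem exists_coeffs_of_mem_diffOpsLT {r : ℕ} {T : A → A} (hT : T ∈ D.diffOpsLT r) :
    ∃ c : Fin r → A, ∀ x, T x = ∑ k, c k * (⇑D)^[k] x := by
  obtain ⟨c, rfl⟩ := (Submodule.mem_span_range_iff_exists_fun A).1 hT
  exact ⟨c, fun x => by simp⟩

theorem exists_eq_add_smul_iterate {r : ℕ} {T : A → A} (hT : T ∈ D.diffOpsLT (r + 1)) :
    ∃ T' ∈ D.diffOpsLT r, ∃ c : A, T = T' + c • (⇑D)^[r] := by
  obtain ⟨c, rfl⟩ := (Submodule.mem_span_range_iff_exists_fun A).1 hT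
  refine ⟨∑ k : Fin r, c k.castSucc • (⇑D)^[k], ?_, c (Fin.last r), ?_⟩
  · exact Submodule.sum_mem _ fun k _ => Submodule.smul_mem _ _ (iterate_mem_diffOpsLT k.2)
  · simp [Fin.sum_univ_castSucc]

theorem derivation_comp_mem_diffOpsLT {r : ℕ} {T : A → A} (hT : T ∈ D.diffOpsLT r) :
    ⇑D ∘ T ∈ D.diffOpsLT (r + 1) := by
  induction hT using Submodule.span_induction with
  | mem T hT =>
    obtain ⟨k, rfl⟩ := hT
    rw [← Function.iterate_succ']
    exact iterate_mem_diffOpsLT (by simp)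
  | zero => simp
  | add T S _ _ hT hS =>
    have : ⇑D ∘ (T + S) = ⇑D ∘ T + ⇑D ∘ S := by ext; simp
    exact this ▸ Submodule.add_mem _ hT hS
  | smul c T hT' hT =>
    have : ⇑D ∘ (c • T) = D c • T + c • (⇑D ∘ T) := by ext; simp; ring
    exact this ▸ Submodule.add_mem _ (Submodule.smul_mem _ _ (diffOpsLT_mono (by simp) hT'))
      (Submodule.smul_mem _ _ hT)

theorem iterate_comp_mem_diffOpsLT {r : ℕ} {T : A → A} (hT : T ∈ D.diffOpsLT r) (k : ℕ) :
    (⇑D)^[k] ∘ T ∈ D.diffOpsLT (r + k) := by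
  induction k with
  | zero => simpa using hT
  | succ k ih =>
    rw [Function.iterate_succ', Function.comp_assoc, ← add_assoc]
    exact derivation_comp_mem_diffOpsLT ih

theorem comp_mem_diffOpsLT {r s : ℕ} {T S : A → A} (hT : T ∈ D.diffOpsLT r)
    (hS : S ∈ D.diffOpsLT (s + 1)) : T ∘ S ∈ D.diffOpsLT (r + s) := by
  induction hT using Submodule.span_induction with
  | mem T hT =>
    obtain ⟨k, rfl⟩ := hT
    exact diffOpsLT_mono (by omega) (iterate_comp_mem_diffOpsLT hS k)
  | zero => exact Submodule.zero_mem _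
  | add T T' _ _ hT hT' => exact Submodule.add_mem _ hT hT'
  | smul c T _ hT => exact Submodule.smul_mem _ c hT

end CommRing

section Field

variable {F E : Type*} [Field F] [Field E] [Algebra F E] (D : Derivation F E E)

def wronskian {r : ℕ} (u : Fin r → E) : Matrix (Fin r) (Fin r) E :=
  Matrix.of fun j i => (⇑D)^[j] (u i)

variable {D} (hconst : ∀ x, D x = 0 → x ∈ Set.range (algebraMap F E))
include hconst

theorem det_wronskian_ne_zero {r : ℕ} {u : Fin r → E} (hu : LinearIndependent F u) :
    (D.wronskian u).det ≠ 0 := by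
  induction r with
  | zero => simp
  | succ r ih =>
    intro hdet
    obtain ⟨g, hg0, hg⟩ := Matrix.exists_mulVec_eq_zero_iff.2 hdet
    obtain ⟨s, hs⟩ := Function.ne_iff.1 hg0
    set h := (g s)⁻¹ • g with h_def
    have hhs : h s = 1 := inv_mul_cancel₀ hs
    have hrel : ∀ j : Fin (r + 1), ∑ i, (⇑D)^[j] (u i) * h i = 0 := fun j => by
      have hj : ∑ i, (⇑D)^[j] (u i) * g i = 0 := by
        simpa [wronskian, Matrix.mulVec, dotProduct] using congrFun hg j
      simp [h_def, mul_left_comm _ (g s)⁻¹, ← Finset.mul_sum, hj]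
    -- as `h s = 1`, differentiating the relations shows `D h` solves those of `u` without `u s`
    have hrelD : ∀ j : Fin r, ∑ i, (⇑D)^[j] (u i) * D (h i) = 0 := fun j => by
      have hd := congrArg D (hrel j.castSucc)
      have hnext := hrel j.succ
      simp only [Fin.val_castSucc, Fin.val_succ, Function.iterate_succ_apply', map_sum,
        Derivation.leibniz, smul_eq_mul, map_zero, Finset.sum_add_distrib] at hd hnext
      simpa [mul_comm, hnext] using hd
    have hDh : ∀ i, D (h i) = 0 := by
      have hsub := ih (hu.comp _ (Fin.succAbove_right_injective (p := s)))
      have := Matrix.eq_zero_of_mulVec_eq_zero hsub (v := fun i => D (h (s.succAbove i))) <| by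
        funext j
        have := hrelD j
        rw [Fin.sum_univ_succAbove _ s, hhs, Derivation.map_one_eq_zero, mul_zero, zero_add] at this
        simpa [wronskian, Matrix.mulVec, dotProduct] using this
      intro i
      rcases Fin.eq_self_or_eq_succAbove s i with rfl | ⟨k, rfl⟩
      · rw [hhs, Derivation.map_one_eq_zero]
      · exact congrFun this k
    choose c hc using fun i => hconst _ (hDh i)
    have hc0 : c = 0 := by
      refine funext (Fintype.linearIndependent_iff.1 hu c ?_)
      simpa [hc, Algebra.smul_def, mul_comm] using hrel 0
    simp [← hc, hc0] at hhs

theorem eq_zero_of_sum_iterate_eq_zero {r : ℕ} {u : Fin r → E} (hu : LinearIndependent F u)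
    {c : Fin r → E} (h : ∀ i, ∑ k, c k * (⇑D)^[k] (u i) = 0) : c = 0 := by
  by_contra hc
  refine det_wronskian_ne_zero hconst hu (Matrix.exists_vecMul_eq_zero_iff.1 ⟨c, hc, ?_⟩)
  funext i
  simpa [wronskian, Matrix.vecMul, dotProduct] using h i

theorem eq_zero_of_mem_diffOpsLT {r : ℕ} {u : Fin r → E} (hu : LinearIndependent F u)
    {T : E → E} (hT : T ∈ D.diffOpsLT r) (h : ∀ i, T (u i) = 0) : T = 0 := by
  obtain ⟨c, hc⟩ := exists_coeffs_of_mem_diffOpsLT hT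
  have hc0 := eq_zero_of_sum_iterate_eq_zero hconst hu (c := c) fun i => hc (u i) ▸ h i
  funext x
  simp [hc, hc0]

theorem eq_zero_of_mem_diffOpsLT_of_derivation_eq_zero {r : ℕ} {u : Fin (r + 1) → E}
    (hu : LinearIndependent F u) {T : E → E} (hT : T ∈ D.diffOpsLT r) (h : ∀ x, D (T x) = 0) :
    T = 0 := by
  induction r generalizing T with
  | zero =>
    obtain ⟨c, hc⟩ := exists_coeffs_of_mem_diffOpsLT hT
    funext x
    simp [hc]
  | succ r ih =>
    obtain ⟨T', hT', c, rfl⟩ := exists_eq_add_smul_iterate hT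
    obtain ⟨s, hs⟩ := exists_coeffs_of_mem_diffOpsLT <| Submodule.add_mem _
      (derivation_comp_mem_diffOpsLT hT') (Submodule.smul_mem _ (D c) (iterate_mem_diffOpsLT
        (Nat.lt_succ_self r)))
    -- the top coefficient of `D ∘ T` is that of `T`, and the Wronskian kills it
    have hsc := eq_zero_of_sum_iterate_eq_zero hconst hu (c := Fin.snoc s c) fun i => by
      have := h (u i)
      simp only [Pi.add_apply, Pi.smul_apply, smul_eq_mul, map_add, Derivation.leibniz] at this
      simp [Fin.sum_univ_castSucc, ← hs, Function.iterate_succ_apply']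
      linear_combination this
    have hc : c = 0 := by simpa using congrFun hsc (Fin.last _)
    subst hc
    simp only [zero_smul, add_zero] at h ⊢
    exact ih (hu.comp _ (Fin.castSucc_injective _)) hT' h

end Field

end Derivation

/-- The formal adjoint and the bilinear concomitant are defined by recursion on these expression
trees, which turns Lagrange's identity into a structural induction. -/
inductive DiffOp (A : Type*)
  | coeff (a : A)
  | deriv
  | add (p q : DiffOp A)
  | comp (p q : DiffOp A)

namespace DiffOp

section

variable {A : Type*}

def order : DiffOp A → ℕ
  | coeff _ => 0
  | deriv => 1
  | add p q => max (order p) (order q)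
  | comp p q => order p + order q

/-- `∑ i, a i * ∂^i`, written as `a 0 + (∑ i, a (i + 1) * ∂^i) ∘ ∂`. -/
def ofCoeffs : (m : ℕ) → (Fin (m + 1) → A) → DiffOp A
  | 0, a => coeff (a 0)
  | m + 1, a => add (coeff (a 0)) (comp (ofCoeffs m (Fin.tail a)) deriv)

theorem order_ofCoeffs_le (m : ℕ) (a : Fin (m + 1) → A) : (ofCoeffs m a).order ≤ m := by
  induction m with
  | zero => simp [ofCoeffs, order]
  | succ m ih => simpa [ofCoeffs, order] using ih (Fin.tail a)

end

section Algebra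

variable {R A : Type*} [CommRing R] [CommRing A] [Algebra R A]

def adjoint : DiffOp A → DiffOp A
  | coeff a => coeff a
  | deriv => comp (coeff (-1)) deriv
  | add p q => add (adjoint p) (adjoint q)
  | comp p q => comp (adjoint q) (adjoint p)

def map (f : A →+* A) : DiffOp A → DiffOp A
  | coeff a => coeff (f a)
  | deriv => deriv
  | add p q => add (map f p) (map f q)
  | comp p q => comp (map f p) (map f q)

variable (D : Derivation R A A)

def eval : DiffOp A → A →ₗ[R] A
  | coeff a => LinearMap.mulLeft R a
  | deriv => D
  | add p q => eval p + eval q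
  | comp p q => eval p ∘ₗ eval q

def concomitant : DiffOp A → A →ₗ[R] A →ₗ[R] A
  | coeff _ => 0
  | deriv => LinearMap.mul R A
  | add p q => concomitant p + concomitant q
  | comp p q => concomitant p ∘ₗ eval D q + (concomitant q).compl₂ (eval D (adjoint p))

theorem derivation_concomitant (p : DiffOp A) (x z : A) :
    D (concomitant D p x z) = z * eval D p x - eval D p.adjoint z * x := by
  induction p generalizing x z with
  | coeff a => simp [concomitant, eval, adjoint]; ring
  | deriv => simp [concomitant, eval, adjoint]; ring
  | add p q ihp ihq => simp [concomitant, eval, adjoint, ihp, ihq]; ring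
  | comp p q ihp ihq => simp [concomitant, eval, adjoint, ihp, ihq]

theorem order_adjoint (p : DiffOp A) : p.adjoint.order = p.order := by
  induction p with
  | coeff a => rfl
  | deriv => rfl
  | add p q ihp ihq => simp [adjoint, order, ihp, ihq]
  | comp p q ihp ihq => simp [adjoint, order, ihp, ihq]; omega

theorem adjoint_map (f : A →+* A) (p : DiffOp A) : (p.map f).adjoint = p.adjoint.map f := by
  induction p with
  | coeff a => rfl
  | deriv => simp [map, adjoint]
  | add p q ihp ihq => simp [adjoint, map, ihp, ihq]
  | comp p q ihp ihq => simp [adjoint, map, ihp, ihq]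

variable {D}

theorem map_eval {f : A →+* A} (hf : ∀ x, f (D x) = D (f x)) (p : DiffOp A) (x : A) :
    f (eval D p x) = eval D (p.map f) (f x) := by
  induction p generalizing x with
  | coeff a => simp [eval, map]
  | deriv => exact hf x
  | add p q ihp ihq => simp [eval, map, ihp, ihq]
  | comp p q ihp ihq => simp [eval, map, ihp, ihq]

theorem map_concomitant {f : A →+* A} (hf : ∀ x, f (D x) = D (f x)) (p : DiffOp A) (x z : A) :
    f (concomitant D p x z) = concomitant D (p.map f) (f x) (f z) := by
  induction p generalizing x z with
  | coeff a => simp [concomitant, map]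
  | deriv => simp [concomitant, map]
  | add p q ihp ihq => simp [concomitant, map, ihp, ihq]
  | comp p q ihp ihq => simp [concomitant, map, ihp, ihq, map_eval hf, adjoint_map]

theorem map_mem_ker_eval {f : A →+* A} (hf : ∀ x, f (D x) = D (f x)) {p : DiffOp A}
    (hp : p.map f = p) {x : A} (hx : x ∈ LinearMap.ker (eval D p)) :
    f x ∈ LinearMap.ker (eval D p) := by
  have := map_eval hf p x
  rw [hp, show eval D p x = 0 from hx, map_zero] at this
  exact this.symm

theorem eval_ofCoeffs (m : ℕ) (a : Fin (m + 1) → A) (x : A) :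
    eval D (ofCoeffs m a) x = ∑ i, a i * (⇑D)^[i] x := by
  induction m generalizing x with
  | zero => simp [ofCoeffs, eval]
  | succ m ih =>
    simp [ofCoeffs, eval, ih, Fin.sum_univ_succ (n := m + 1), Fin.tail]

theorem eval_adjoint_ofCoeffs (m : ℕ) (a : Fin (m + 1) → A) (z : A) :
    eval D (ofCoeffs m a).adjoint z = ∑ i : Fin (m + 1), (-1) ^ (i : ℕ) * (⇑D)^[i] (a i * z) := by
  induction m generalizing z with
  | zero => simp [ofCoeffs, adjoint, eval]
  | succ m ih =>
    simp [-Derivation.leibniz, ofCoeffs, adjoint, eval, ih, Fin.sum_univ_succ (n := m + 1),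
      Fin.tail, pow_succ, Function.iterate_succ_apply']
    exact Finset.sum_congr rfl fun i _ => by simp [Derivation.leibniz_pow]

theorem map_ofCoeffs (f : A →+* A) (m : ℕ) (a : Fin (m + 1) → A) :
    (ofCoeffs m a).map f = ofCoeffs m (f ∘ a) := by
  induction m with
  | zero => rfl
  | succ m ih => simp [ofCoeffs, map, ih]; rfl

end Algebra

section Order

variable {R A : Type*} [CommRing R] [CommRing A] [Algebra R A] {D : Derivation R A A}
open Derivation

theorem eval_mem_diffOpsLT (p : DiffOp A) : ⇑(eval D p) ∈ D.diffOpsLT (p.order + 1) := by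
  induction p with
  | coeff a =>
    have : ⇑(eval D (coeff a)) = a • (⇑D)^[0] := by ext; simp [eval]
    exact this ▸ Submodule.smul_mem _ a (iterate_mem_diffOpsLT (by simp))
  | deriv => exact iterate_mem_diffOpsLT (k := 1) (by simp [order])
  | add p q ihp ihq =>
    exact Submodule.add_mem _ (diffOpsLT_mono (by simp [order]) ihp)
      (diffOpsLT_mono (by simp [order]) ihq)
  | comp p q ihp ihq =>
    rw [eval, LinearMap.coe_comp]
    exact diffOpsLT_mono (by simp [order]; omega) (comp_mem_diffOpsLT ihp ihq)

theorem concomitant_flip_mem_diffOpsLT (p : DiffOp A) (z : A) :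
    ⇑((concomitant D p).flip z) ∈ D.diffOpsLT p.order := by
  induction p generalizing z with
  | coeff a => exact Submodule.zero_mem _
  | deriv =>
    have : ⇑((concomitant D deriv).flip z) = z • (⇑D)^[0] := by ext; simp [concomitant]
    exact this ▸ Submodule.smul_mem _ z (iterate_mem_diffOpsLT (by simp [order]))
  | add p q ihp ihq =>
    have : ⇑((concomitant D (add p q)).flip z) =
        ⇑((concomitant D p).flip z) + ⇑((concomitant D q).flip z) := by ext; simp [concomitant]
    exact this ▸ Submodule.add_mem _ (diffOpsLT_mono (by simp [order]) (ihp z))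
      (diffOpsLT_mono (by simp [order]) (ihq z))
  | comp p q ihp ihq =>
    have : ⇑((concomitant D (comp p q)).flip z) = ⇑((concomitant D p).flip z) ∘ ⇑(eval D q) +
        ⇑((concomitant D q).flip (eval D p.adjoint z)) := by ext; simp [concomitant]
    exact this ▸ Submodule.add_mem _ (comp_mem_diffOpsLT (ihp z) (eval_mem_diffOpsLT q))
      (diffOpsLT_mono (by simp [order]) (ihq _))

theorem concomitant_mem_diffOpsLT (p : DiffOp A) (x : A) :
    ⇑(concomitant D p x) ∈ D.diffOpsLT p.order := by
  induction p generalizing x with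
  | coeff a => exact Submodule.zero_mem _
  | deriv =>
    have : ⇑(concomitant D deriv x) = x • (⇑D)^[0] := by ext; simp [concomitant]
    exact this ▸ Submodule.smul_mem _ x (iterate_mem_diffOpsLT (by simp [order]))
  | add p q ihp ihq =>
    exact Submodule.add_mem _ (diffOpsLT_mono (by simp [order]) (ihp x))
      (diffOpsLT_mono (by simp [order]) (ihq x))
  | comp p q ihp ihq =>
    have : ⇑(concomitant D (comp p q) x) = ⇑(concomitant D p (eval D q x)) +
        ⇑(concomitant D q x) ∘ ⇑(eval D p.adjoint) := by ext; simp [concomitant]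
    have hadj := order_adjoint p ▸ eval_mem_diffOpsLT (D := D) p.adjoint
    exact this ▸ Submodule.add_mem _ (diffOpsLT_mono (by simp [order]) (ihp _))
      (diffOpsLT_mono (by simp [order]; omega) (comp_mem_diffOpsLT (ihq x) hadj))

end Order

section Twisted

variable {R A : Type*} [CommRing R] [CommRing A] [Algebra R A] (D : Derivation R A A)

def twistedConcomitant (P : DiffOp A) (γ : A) : A →ₗ[R] A →ₗ[R] A :=
  (concomitant D P).compl₂ (LinearMap.mulLeft R γ)

variable {D}

theorem map_twistedConcomitant {f : A →+* A} (hf : ∀ x, f (D x) = D (f x)) {P : DiffOp A}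
    (hP : P.map f = P) {γ : A} (hγ : f γ = γ) (x y : A) :
    f (twistedConcomitant D P γ x y) = twistedConcomitant D P γ (f x) (f y) := by
  simp [twistedConcomitant, map_concomitant hf, hP, hγ]

theorem twistedConcomitant_mem_diffOpsLT (P : DiffOp A) (γ x : A) :
    ⇑(twistedConcomitant D P γ x) ∈ D.diffOpsLT P.order := by
  have hmul : ⇑(LinearMap.mulLeft R γ) ∈ D.diffOpsLT (0 + 1) := by
    have : ⇑(LinearMap.mulLeft R γ) = γ • (⇑D)^[0] := by ext; simp
    exact this ▸ Submodule.smul_mem _ γ (Derivation.iterate_mem_diffOpsLT (by simp))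
  have : ⇑(twistedConcomitant D P γ x) = ⇑(concomitant D P x) ∘ ⇑(LinearMap.mulLeft R γ) := by
    ext; simp [twistedConcomitant]
  rw [this, ← add_zero P.order]
  exact Derivation.comp_mem_diffOpsLT (concomitant_mem_diffOpsLT P x) hmul

variable {n : ℕ} {P : DiffOp A} {γ : A}
  (hself : ∀ y, eval D P.adjoint (γ * y) = (-1) ^ (n + 1) * (γ * eval D P y))
include hself

theorem derivation_twistedConcomitant (x y : A) :
    D (twistedConcomitant D P γ x y) =
      γ * y * eval D P x - (-1) ^ (n + 1) * (γ * eval D P y) * x := by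
  simp [twistedConcomitant, derivation_concomitant, hself]

theorem derivation_twistedConcomitant_eq_zero {x y : A} (hx : eval D P x = 0)
    (hy : eval D P y = 0) : D (twistedConcomitant D P γ x y) = 0 := by
  simp [derivation_twistedConcomitant hself, hx, hy]

end Twisted

section Field

variable {F E : Type*} [Field F] [Field E] [Algebra F E] {D : Derivation F E E}
  (hconst : ∀ x, D x = 0 → x ∈ Set.range (algebraMap F E))
  {n : ℕ} {P : DiffOp E} (hord : P.order ≤ n + 1) {γ : E}
  (hself : ∀ y, eval D P.adjoint (γ * y) = (-1) ^ (n + 1) * (γ * eval D P y))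
include hconst hord hself

open Derivation

theorem twistedConcomitant_comm {u : Fin (n + 2) → E} (hu : LinearIndependent F u) (x y : E) :
    twistedConcomitant D P γ x y = (-1) ^ n * twistedConcomitant D P γ y x := by
  set T : E → E := fun x => twistedConcomitant D P γ x y + (-1) ^ (n + 1) *
    twistedConcomitant D P γ y x
  have hT : T ∈ D.diffOpsLT (n + 1) := Submodule.add_mem _
    (diffOpsLT_mono hord (concomitant_flip_mem_diffOpsLT P (γ * y)))
    (Submodule.smul_mem _ _ (diffOpsLT_mono hord (twistedConcomitant_mem_diffOpsLT P γ y)))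
  have hDT : ∀ x, D (T x) = 0 := fun x => by
    have hsq : ((-1 : E) ^ (n + 1)) ^ 2 = 1 := by rw [← pow_mul, mul_comm, pow_mul]; simp
    simp only [T, map_add, Derivation.leibniz, derivation_twistedConcomitant hself,
      Derivation.leibniz_pow, map_neg, Derivation.map_one_eq_zero, smul_eq_mul]
    linear_combination (-(γ * y * eval D P x)) * hsq
  have := congrFun (eq_zero_of_mem_diffOpsLT_of_derivation_eq_zero hconst hu hT hDT) x
  simp only [T, Pi.zero_apply] at this
  linear_combination this

theorem eq_zero_of_twistedConcomitant_eq_zero (hγ : γ ≠ 0) {w : Fin (n + 1) → E}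
    (hw : LinearIndependent F w) {v : E} (hv : eval D P v ≠ 0)
    {x : E} (hx : eval D P x = 0) (hxw : ∀ i, twistedConcomitant D P γ x (w i) = 0) : x = 0 := by
  have hQx := eq_zero_of_mem_diffOpsLT hconst hw
    (diffOpsLT_mono hord (twistedConcomitant_mem_diffOpsLT P γ x)) hxw
  -- Lagrange's identity for the pair `(x, v)` now reads `0 = ± γ (P v) x`
  have := derivation_twistedConcomitant hself x v
  rw [congrFun hQx v, Pi.zero_apply, map_zero, hx] at this
  simpa [hγ, hv] using this

end Field

section Invariant

variable {F E : Type*} [Field F] [Field E] [Algebra F E]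

structure IsInvariantForm (D : Derivation F E E) (P : DiffOp E) (γ : E) (n : ℕ)
    (Q : E →ₗ[F] E →ₗ[F] E) : Prop where
  mem_range : ∀ x ∈ LinearMap.ker (eval D P), ∀ y ∈ LinearMap.ker (eval D P),
    Q x y ∈ Set.range (algebraMap F E)
  comm : ∀ x ∈ LinearMap.ker (eval D P), ∀ y ∈ LinearMap.ker (eval D P),
    Q x y = (-1) ^ n * Q y x
  eq_zero : ∀ x ∈ LinearMap.ker (eval D P), (∀ y ∈ LinearMap.ker (eval D P), Q x y = 0) → x = 0
  invariant : ∀ σ : E →+* E, (∀ x, σ (D x) = D (σ x)) → P.map σ = P → σ γ = γ →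
    (∀ c, σ (algebraMap F E c) = algebraMap F E c) →
    ∀ x ∈ LinearMap.ker (eval D P), ∀ y ∈ LinearMap.ker (eval D P), Q (σ x) (σ y) = Q x y

variable {D : Derivation F E E} {n : ℕ} {P : DiffOp E} {γ : E} {w : Fin (n + 1) → E}
  (hw : LinearIndependent F w)
include hw

theorem isInvariantForm_twistedConcomitant
    (hconst : ∀ x, D x = 0 → x ∈ Set.range (algebraMap F E)) (hord : P.order ≤ n + 1) (hγ : γ ≠ 0)
    (hself : ∀ y, eval D P.adjoint (γ * y) = (-1) ^ (n + 1) * (γ * eval D P y))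
    (hwP : ∀ i, eval D P (w i) = 0) {v : E} (hv : eval D P v ≠ 0) :
    IsInvariantForm D P γ n (twistedConcomitant D P γ) := by
  have hconstQ : ∀ x ∈ LinearMap.ker (eval D P), ∀ y ∈ LinearMap.ker (eval D P),
      twistedConcomitant D P γ x y ∈ Set.range (algebraMap F E) := fun x hx y hy =>
    hconst _ (derivation_twistedConcomitant_eq_zero hself hx hy)
  have hwv : LinearIndependent F (Fin.snoc w v : Fin (n + 2) → E) := by
    refine linearIndependent_finSnoc.2 ⟨hw, fun hspan => hv ?_⟩
    exact (Submodule.span_le.2 (Set.range_subset_iff.2 hwP) hspan : v ∈ LinearMap.ker _)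
  refine ⟨hconstQ, fun x _ y _ => twistedConcomitant_comm hconst hord hself hwv x y,
    fun x hx hxy => eq_zero_of_twistedConcomitant_eq_zero hconst hord hself hγ hw hv hx
      fun i => hxy _ (hwP i), ?_⟩
  intro σ hσD hσP hσγ hσF x hx y hy
  obtain ⟨c, hc⟩ := hconstQ x hx y hy
  rw [← map_twistedConcomitant hσD hσP hσγ, ← hc, hσF]

theorem isInvariantForm_mul [IsAlgClosed F] (hspan : ⊤ ≤ Submodule.span F (Set.range w)) :
    IsInvariantForm D P γ n (LinearMap.mul F E) := by
  have : Module.Finite F E := ⟨Submodule.fg_def.2 ⟨_, Set.finite_range w, top_le_iff.1 hspan⟩⟩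
  have := Algebra.IsIntegral.of_finite F E
  have hbij := IsAlgClosed.algebraMap_bijective_of_isIntegral (k := F) (K := E)
  have hn : n = 0 := by
    have := hw.fintype_card_le_finrank
    rw [← (LinearEquiv.ofBijective (Algebra.linearMap F E) hbij).finrank_eq,
      Module.finrank_self, Fintype.card_fin] at this
    omega
  subst hn
  refine ⟨fun x _ y _ => hbij.2 _, fun x _ y _ => by simp [mul_comm],
    fun x hx hxy => by simpa using hxy x hx, ?_⟩
  intro σ _ _ _ hσF x _ y _
  obtain ⟨c, rfl⟩ := hbij.2 x
  obtain ⟨d, rfl⟩ := hbij.2 y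
  simp [hσF]

end Invariant

theorem exists_isInvariantForm {F E : Type*} [Field F] [Field E] [Algebra F E] [IsAlgClosed F]
    {D : Derivation F E E} (hconst : ∀ x, D x = 0 → x ∈ Set.range (algebraMap F E)) {n : ℕ}
    {P : DiffOp E} (hord : P.order ≤ n + 1) {γ : E} (hγ : γ ≠ 0)
    (hself : ∀ y, eval D P.adjoint (γ * y) = (-1) ^ (n + 1) * (γ * eval D P y))
    {w : Fin (n + 1) → E} (hw : LinearIndependent F w) (hwP : ∀ i, eval D P (w i) = 0)
    (hspan : LinearMap.ker (eval D P) ≤ Submodule.span F (Set.range w)) :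
    ∃ Q, IsInvariantForm D P γ n Q := by
  by_cases h : ∃ v, eval D P v ≠ 0
  · obtain ⟨v, hv⟩ := h
    exact ⟨_, isInvariantForm_twistedConcomitant hw hconst hord hγ hself hwP hv⟩
  · exact ⟨_, isInvariantForm_mul hw fun x _ => hspan (not_exists_not.1 h x)⟩

theorem IsInvariantForm.exists_gramMatrix {F E : Type*} [Field F] [Field E] [Algebra F E]
    {D : Derivation F E E} {P : DiffOp E} {γ : E} {n : ℕ} {Q : E →ₗ[F] E →ₗ[F] E}
    (hQ : IsInvariantForm D P γ n Q) {w : Fin (n + 1) → E} (hw : ∀ i, eval D P (w i) = 0)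
    (hli : LinearIndependent F w)
    (hsp : LinearMap.ker (eval D P) ≤ Submodule.span F (Set.range w)) :
    ∃ J : Matrix (Fin (n + 1)) (Fin (n + 1)) F,
      (∀ i j, algebraMap F E (J i j) = Q (w i) (w j)) ∧ J.det ≠ 0 ∧
      J.transpose = (-1 : F) ^ n • J ∧
      ∀ f : E →ₗ[F] E, (∀ x ∈ LinearMap.ker (eval D P), f x ∈ LinearMap.ker (eval D P)) →
        (∀ x ∈ LinearMap.ker (eval D P), ∀ y ∈ LinearMap.ker (eval D P), Q (f x) (f y) = Q x y) →
        ∃ M : Matrix (Fin (n + 1)) (Fin (n + 1)) F,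
          (∀ i, f (w i) = ∑ j, algebraMap F E (M j i) * w j) ∧ M.transpose * J * M = J := by
  classical
  set V := LinearMap.ker (eval D P)
  have hinj := (algebraMap F E).injective
  let B : LinearMap.BilinForm F V := (Q.domRestrict₁₂ V V).codRestrict₂ (Algebra.linearMap F E)
    hinj fun x y => hQ.mem_range x x.2 y y.2
  have hB : ∀ x y : V, algebraMap F E (B x y) = Q x y := fun x y =>
    LinearMap.codRestrict₂_apply (Q.domRestrict₁₂ V V) (Algebra.linearMap F E) hinj _ x y
  let b : Module.Basis (Fin (n + 1)) F V := .mk (v := fun i => ⟨w i, hw i⟩)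
    (.of_comp V.subtype hli) fun x _ => by
      obtain ⟨c, hc⟩ := (Submodule.mem_span_range_iff_exists_fun F).1 (hsp x.2)
      exact (Submodule.mem_span_range_iff_exists_fun F).2 ⟨c, Subtype.ext (by simpa using hc)⟩
  have hb : ∀ i, (b i : E) = w i := fun i => by simp [b]
  have := Module.Finite.of_basis b
  refine ⟨LinearMap.BilinForm.toMatrix b B, fun i j => ?_, ?_, ?_, fun f hfV hfQ => ?_⟩
  · rw [LinearMap.BilinForm.toMatrix_apply, hB, hb, hb]
  · refine (LinearMap.BilinForm.nondegenerate_iff_det_ne_zero b).1 <|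
      .ofSeparatingLeft fun x hx => Subtype.ext ?_
    exact hQ.eq_zero x x.2 fun y hy => by rw [← hB x ⟨y, hy⟩, hx, map_zero]
  · ext i j
    apply hinj
    simp only [Matrix.transpose_apply, Matrix.smul_apply, LinearMap.BilinForm.toMatrix_apply,
      smul_eq_mul, map_mul, map_pow, map_neg, map_one, hB]
    exact hQ.comm _ (b j).2 _ (b i).2
  let fV : V →ₗ[F] V := f.restrict hfV
  refine ⟨LinearMap.toMatrix b b fV, fun i => ?_, ?_⟩
  · have := congrArg Subtype.val (b.sum_repr (fV (b i)))
    simp only [Submodule.coe_sum, Submodule.coe_smul, hb, Algebra.smul_def] at this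
    simp only [LinearMap.toMatrix_apply]
    rw [this, ← hb i]
    rfl
  · rw [← LinearMap.BilinForm.toMatrix_comp]
    congr 1
    ext x y
    apply hinj
    rw [LinearMap.BilinForm.comp_apply, hB, hB]
    exact hfQ x x.2 y y.2

theorem IsInvariantForm.exists_bilinear {F E : Type*} [Field F] [Field E] [Algebra F E]
    (K : Subfield E) (hFK : ∀ c, algebraMap F E c ∈ K) {D : Derivation F E E} {P : DiffOp E}
    (hPK : ∀ σ : E ≃+* E, (∀ k ∈ K, σ k = k) → P.map σ = P) {γ : E} (hγK : γ ∈ K) {n : ℕ}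
    {Q : E →ₗ[F] E →ₗ[F] E} (hQ : IsInvariantForm D P γ n Q) {w : Fin (n + 1) → E}
    (hw : ∀ i, eval D P (w i) = 0) (hli : LinearIndependent F w)
    (hsp : LinearMap.ker (eval D P) ≤ Submodule.span F (Set.range w)) :
    ∃ B : E → E → F,
      (∀ x y z, eval D P x = 0 → eval D P y = 0 → eval D P z = 0 →
        B (x + y) z = B x z + B y z ∧ B z (x + y) = B z x + B z y) ∧
      (∀ (c : F) (x y), eval D P x = 0 → eval D P y = 0 →
        B (algebraMap F E c * x) y = c * B x y ∧ B x (algebraMap F E c * y) = c * B x y) ∧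
      (∀ x y, eval D P x = 0 → eval D P y = 0 → B x y = (-1 : F) ^ n * B y x) ∧
      (∀ x, eval D P x = 0 → (∀ y, eval D P y = 0 → B x y = 0) → x = 0) ∧
      (∀ σ : E ≃+* E, (∀ k ∈ K, σ k = k) → (∀ x, σ (D x) = D (σ x)) →
        ∀ x y, eval D P x = 0 → eval D P y = 0 → B (σ x) (σ y) = B x y) ∧
      (∃ J : Matrix (Fin (n + 1)) (Fin (n + 1)) F,
        (∀ i j, J i j = B (w i) (w j)) ∧ J.det ≠ 0 ∧ J.transpose = (-1 : F) ^ n • J ∧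
        ∀ σ : E ≃+* E, (∀ k ∈ K, σ k = k) → (∀ x, σ (D x) = D (σ x)) →
          ∃ M : Matrix (Fin (n + 1)) (Fin (n + 1)) F,
            (∀ i, σ (w i) = ∑ j, algebraMap F E (M j i) * w j) ∧
            M.transpose * J * M = J) := by
  set V := LinearMap.ker (eval D P)
  have hinj := (algebraMap F E).injective
  have hσF : ∀ σ : E ≃+* E, (∀ k ∈ K, σ k = k) → ∀ c, σ (algebraMap F E c) = algebraMap F E c :=
    fun σ hσK c => hσK _ (hFK c)
  have hσV : ∀ σ : E ≃+* E, (∀ k ∈ K, σ k = k) → (∀ x, σ (D x) = D (σ x)) → ∀ x ∈ V, σ x ∈ V :=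
    fun σ hσK hσD _ => map_mem_ker_eval (f := (σ : E →+* E)) hσD (hPK σ hσK)
  have hσQ : ∀ σ : E ≃+* E, (∀ k ∈ K, σ k = k) → (∀ x, σ (D x) = D (σ x)) →
      ∀ x ∈ V, ∀ y ∈ V, Q (σ x) (σ y) = Q x y := fun σ hσK hσD =>
    hQ.invariant σ hσD (hPK σ hσK) (hσK γ hγK) (hσF σ hσK)
  have hB : ∀ x ∈ V, ∀ y ∈ V, algebraMap F E (Function.invFun (algebraMap F E) (Q x y)) = Q x y :=
    fun x hx y hy => Function.invFun_eq (hQ.mem_range x hx y hy)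
  have hsmul : ∀ (c : F) x, x ∈ V → algebraMap F E c * x ∈ V := fun c x hx =>
    Algebra.smul_def c x ▸ V.smul_mem c hx
  obtain ⟨J, hJ, hdet, hJt, hM⟩ := hQ.exists_gramMatrix hw hli hsp
  refine ⟨fun x y => Function.invFun (algebraMap F E) (Q x y), ?_, ?_, ?_, ?_, ?_,
    J, fun i j => hinj ((hJ i j).trans (hB _ (hw i) _ (hw j)).symm), hdet, hJt,
    fun σ hσK hσD => hM (AlgEquiv.ofRingEquiv (hσF σ hσK)).toLinearMap (hσV σ hσK hσD)
      (hσQ σ hσK hσD)⟩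
  · intro x y z hx hy hz
    constructor <;> apply hinj
    · rw [map_add, hB _ (V.add_mem hx hy) _ hz, hB _ hx _ hz, hB _ hy _ hz, map_add,
        LinearMap.add_apply]
    · rw [map_add, hB _ hz _ (V.add_mem hx hy), hB _ hz _ hx, hB _ hz _ hy, map_add]
  · intro c x y hx hy
    constructor <;> apply hinj
    · rw [map_mul, hB _ (hsmul c x hx) _ hy, hB _ hx _ hy, ← Algebra.smul_def, map_smul,
        LinearMap.smul_apply, Algebra.smul_def]
    · rw [map_mul, hB _ hx _ (hsmul c y hy), hB _ hx _ hy, ← Algebra.smul_def, map_smul,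
        Algebra.smul_def]
  · intro x y hx hy
    apply hinj
    rw [map_mul, map_pow, map_neg, map_one, hB _ hx _ hy, hB _ hy _ hx]
    exact hQ.comm x hx y hy
  · intro x hx h
    beta_reduce at h
    exact hQ.eq_zero x hx fun y hy => by rw [← hB x hx y hy, h y hy, map_zero]
  · intro σ hσK hσD x y hx hy
    apply hinj
    rw [hB _ (hσV σ hσK hσD x hx) _ (hσV σ hσK hσD y hy), hB _ hx _ hy]
    exact hσQ σ hσK hσD x hx y hy

end DiffOp

theorem selfdual_galois_group_preserves_form_general
    (n : ℕ) (E : Type*) [Field E] [Algebra ℂ E]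
    (K : Subfield E) (D : E → E)
    (hDadd : ∀ x y, D (x + y) = D x + D y)
    (hDmul : ∀ x y, D (x * y) = x * D y + D x * y)
    (hCK : ∀ c : ℂ, algebraMap ℂ E c ∈ K)
    (hconst : ∀ x : E, D x = 0 ↔ ∃ c : ℂ, x = algebraMap ℂ E c)
    (a : Fin (n + 2) → E) (haK : ∀ i, a i ∈ K)
    (L Ldual : E → E)
    (hL : ∀ y, L y = ∑ i : Fin (n + 2), a i * D^[(i : ℕ)] y)
    (hLdual : ∀ y, Ldual y = ∑ i : Fin (n + 2),
      (-1 : E) ^ (n + 1 + (i : ℕ)) * D^[(i : ℕ)] (a i * y))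
    -- the solution space in `E` is full, with `ℂ`-basis `w`
    (w : Fin (n + 1) → E) (hw : ∀ i, L (w i) = 0)
    (hspan : ∀ x, L x = 0 → ∃ c : Fin (n + 1) → ℂ,
      x = ∑ i, algebraMap ℂ E (c i) * w i)
    (hindep : ∀ c : Fin (n + 1) → ℂ,
      (∑ i, algebraMap ℂ E (c i) * w i) = 0 → ∀ i, c i = 0)
    -- self-duality
    (α : E) (hαK : α ∈ K) (hα : α ≠ 0)
    (hself : ∀ y, L (α * y) = α * Ldual y) :
    ∃ B : E → E → ℂ,
      -- bilinearity on the solution space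
      (∀ x y z, L x = 0 → L y = 0 → L z = 0 →
        B (x + y) z = B x z + B y z ∧ B z (x + y) = B z x + B z y) ∧
      (∀ (c : ℂ) (x y), L x = 0 → L y = 0 →
        B (algebraMap ℂ E c * x) y = c * B x y ∧ B x (algebraMap ℂ E c * y) = c * B x y) ∧
      -- `(−1)ⁿ`-symmetry
      (∀ x y, L x = 0 → L y = 0 → B x y = (-1 : ℂ) ^ n * B y x) ∧
      -- nondegeneracy
      (∀ x, L x = 0 → (∀ y, L y = 0 → B x y = 0) → x = 0) ∧
      -- invariance under the differential Galois group
      (∀ σ : E ≃+* E, (∀ k ∈ K, σ k = k) → (∀ x, σ (D x) = D (σ x)) →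
        ∀ x y, L x = 0 → L y = 0 → B (σ x) (σ y) = B x y) ∧
      -- matrix form: `G` embeds into the isometry group of the Gram matrix `J`,
      -- i.e. into `Sp_{n+1}(ℂ)` for `n+1` even and `O_{n+1}(ℂ)` for `n+1` odd
      (∃ J : Matrix (Fin (n + 1)) (Fin (n + 1)) ℂ,
        (∀ i j, J i j = B (w i) (w j)) ∧ J.det ≠ 0 ∧ J.transpose = (-1 : ℂ) ^ n • J ∧
        ∀ σ : E ≃+* E, (∀ k ∈ K, σ k = k) → (∀ x, σ (D x) = D (σ x)) →
          ∃ M : Matrix (Fin (n + 1)) (Fin (n + 1)) ℂ,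
            (∀ i, σ (w i) = ∑ j, algebraMap ℂ E (M j i) * w j) ∧
            M.transpose * J * M = J) := by
  let D' : Derivation ℂ E E := .ofLeibniz D hDadd hDmul fun c => (hconst _).2 ⟨c, rfl⟩
  set P := DiffOp.ofCoeffs (n + 1) a
  have hPL : ⇑(P.eval D') = L := funext fun y => (DiffOp.eval_ofCoeffs _ _ _).trans (hL y).symm
  have hPdual : ∀ y, P.adjoint.eval D' y = (-1) ^ (n + 1) * Ldual y := fun y => by
    rw [hLdual, DiffOp.eval_adjoint_ofCoeffs, Finset.mul_sum]
    refine Finset.sum_congr rfl fun i _ => ?_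
    rw [← mul_assoc, ← pow_add, ← add_assoc, ← two_mul, pow_add, pow_mul]
    simp only [neg_one_sq, one_pow, one_mul]
    rfl
  have hPself : ∀ y, P.adjoint.eval D' (α⁻¹ * y) = (-1) ^ (n + 1) * (α⁻¹ * P.eval D' y) :=
    fun y => by
      have hLy := hself (α⁻¹ * y)
      rw [mul_inv_cancel_left₀ hα] at hLy
      rw [hPdual, hPL, hLy, inv_mul_cancel_left₀ hα]
  subst hPL
  have hli : LinearIndependent ℂ w := Fintype.linearIndependent_iff.2 fun c hc =>
    hindep c (by simpa [Algebra.smul_def] using hc)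
  have hsp : LinearMap.ker (P.eval D') ≤ Submodule.span ℂ (Set.range w) := fun x hx => by
    obtain ⟨c, rfl⟩ := hspan x hx
    exact (Submodule.mem_span_range_iff_exists_fun ℂ).2 ⟨c, by simp [Algebra.smul_def]⟩
  obtain ⟨Q, hQ⟩ := DiffOp.exists_isInvariantForm
    (fun x hx => ((hconst x).1 hx).imp fun _ => Eq.symm) (DiffOp.order_ofCoeffs_le _ _)
    (inv_ne_zero hα) hPself hli hw hsp
  refine hQ.exists_bilinear K hCK (fun σ hσK => ?_) (inv_mem hαK) hw hli hsp
  rw [DiffOp.map_ofCoeffs]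
  exact congrArg _ (funext fun i => hσK _ (haK i))

/-- Let `L = Σ_{i=0}^{n+1} a_i ∂^i` (monic, `a_{n+1} = 1`) be an irreducible monic
operator of order `n+1` over a differential field `K` (sitting inside a Picard–Vessiot
type extension `E ⊇ K` with field of constants `ℂ` and a full `(n+1)`-dimensional
solution space), which is self-dual: `L α = α L^∨` for some `0 ≠ α ∈ K`.  Then the
differential Galois group `G` (the `K`-automorphisms of `E` commuting with the
derivation), acting on the solution space, preserves a nondegenerate bilinear
`ℂ`-valued form which is `(−1)ⁿ`-symmetric — antisymmetric if `n` is odd, symmetric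
if `n` is even — and hence, in terms of a solution basis `w` and the Gram matrix `J`
of the form, every element of `G` is represented by a matrix `M` with
`Mᵀ J M = J`: `G` embeds into `Sp_{n+1}(ℂ)` when `n+1` is even and into
`O_{n+1}(ℂ)` when `n+1` is odd. -/
theorem selfdual_galois_group_preserves_form
    (n : ℕ) (E : Type*) [Field E] [Algebra ℂ E]
    (K : Subfield E) (D : E → E)
    (hDadd : ∀ x y, D (x + y) = D x + D y)
    (hDmul : ∀ x y, D (x * y) = x * D y + D x * y)
    (hDK : ∀ x ∈ K, D x ∈ K)
    (hCK : ∀ c : ℂ, algebraMap ℂ E c ∈ K)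
    (hconst : ∀ x : E, D x = 0 ↔ ∃ c : ℂ, x = algebraMap ℂ E c)
    (a : Fin (n + 2) → E) (haK : ∀ i, a i ∈ K)
    (hmonic : a (Fin.last (n + 1)) = 1)
    (L Ldual : E → E)
    (hL : ∀ y, L y = ∑ i : Fin (n + 2), a i * D^[(i : ℕ)] y)
    (hLdual : ∀ y, Ldual y = ∑ i : Fin (n + 2),
      (-1 : E) ^ (n + 1 + (i : ℕ)) * D^[(i : ℕ)] (a i * y))
    -- the solution space in `E` is full, with `ℂ`-basis `w`
    (w : Fin (n + 1) → E) (hw : ∀ i, L (w i) = 0)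
    (hspan : ∀ x, L x = 0 → ∃ c : Fin (n + 1) → ℂ,
      x = ∑ i, algebraMap ℂ E (c i) * w i)
    (hindep : ∀ c : Fin (n + 1) → ℂ,
      (∑ i, algebraMap ℂ E (c i) * w i) = 0 → ∀ i, c i = 0)
    -- irreducibility: no nontrivial subspace of solutions is stable under the
    -- differential Galois group
    (hirr : ∀ W : Submodule ℂ E, (∀ x ∈ W, L x = 0) →
      (∀ σ : E ≃+* E, (∀ k ∈ K, σ k = k) → (∀ x, σ (D x) = D (σ x)) →
        ∀ x ∈ W, σ x ∈ W) →
      (∀ x ∈ W, x = 0) ∨ (∀ x, L x = 0 → x ∈ W))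
    -- self-duality
    (α : E) (hαK : α ∈ K) (hα : α ≠ 0)
    (hself : ∀ y, L (α * y) = α * Ldual y) :
    ∃ B : E → E → ℂ,
      -- bilinearity on the solution space
      (∀ x y z, L x = 0 → L y = 0 → L z = 0 →
        B (x + y) z = B x z + B y z ∧ B z (x + y) = B z x + B z y) ∧
      (∀ (c : ℂ) (x y), L x = 0 → L y = 0 →
        B (algebraMap ℂ E c * x) y = c * B x y ∧ B x (algebraMap ℂ E c * y) = c * B x y) ∧
      -- `(−1)ⁿ`-symmetry
      (∀ x y, L x = 0 → L y = 0 → B x y = (-1 : ℂ) ^ n * B y x) ∧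
      -- nondegeneracy
      (∀ x, L x = 0 → (∀ y, L y = 0 → B x y = 0) → x = 0) ∧
      -- invariance under the differential Galois group
      (∀ σ : E ≃+* E, (∀ k ∈ K, σ k = k) → (∀ x, σ (D x) = D (σ x)) →
        ∀ x y, L x = 0 → L y = 0 → B (σ x) (σ y) = B x y) ∧
      -- matrix form: `G` embeds into the isometry group of the Gram matrix `J`,
      -- i.e. into `Sp_{n+1}(ℂ)` for `n+1` even and `O_{n+1}(ℂ)` for `n+1` odd
      (∃ J : Matrix (Fin (n + 1)) (Fin (n + 1)) ℂ,
        (∀ i j, J i j = B (w i) (w j)) ∧ J.det ≠ 0 ∧ J.transpose = (-1 : ℂ) ^ n • J ∧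
        ∀ σ : E ≃+* E, (∀ k ∈ K, σ k = k) → (∀ x, σ (D x) = D (σ x)) →
          ∃ M : Matrix (Fin (n + 1)) (Fin (n + 1)) ℂ,
            (∀ i, σ (w i) = ∑ j, algebraMap ℂ E (M j i) * w j) ∧
            M.transpose * J * M = J) :=
  selfdual_galois_group_preserves_form_general n E K D hDadd hDmul hCK hconst a haK L Ldual hL
    hLdual w hw hspan hindep α hαK hα hself
end
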